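/- Let d, q ≥ 1 be natural numbers, let A ⊆ ℝ^d and S ⊆ (Fin q → ℝ^d) be compact sets, let μ : ℝ^d → ℝ and K : ℝ^d → ℝ^d → ℝ be continuously differentiable, and suppose that for every X ∈ S the q×q matrix K(X,X) with entries K(X_i, X_j) is invertible. Define the posterior mean m(x, X, y) = μ(x) + Σ_{i,j} K(x, X_i)·(K(X,X)⁻¹)_{ij}·(y_j − μ(X_j)). Then there exist constants C₁, C₂ ≥ 0 such that for all x ∈ A, X ∈ S, and y ∈ ℝ^q, the map X' ↦ m(x, X', y) is differentiable at X and the operator norm of its Fréchet derivative at X is at most C₁ + C₂·‖y‖, where ‖y‖ is the Euclidean norm on ℝ^q. -/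

import Mathlib

open scoped BigOperators

/-!
The posterior mean is affine in the observations: `m(x, X, y) = m(x, X, 0) + w(x, X) y`, where
the kriging weights are `w(x, X) = k(x, X) K(X, X)⁻¹`. Writing the inverse as adjugate over
determinant shows that `m(·, ·, 0)` and `w` are `C¹` near every `(x, X)` with `K(X, X)`
invertible, so their derivatives are bounded on the compact set `A × S`. The derivative of
`X ↦ m(x, X, y)` is bounded by `‖D m(·, ·, 0)‖ + ‖D w‖ ‖y‖`.
-/

/-- The Gaussian process posterior mean at `x` with prior mean `μ` and kernel `K`,
conditioned on observing values `y` at the batch of points `X`: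
`m(x, X, y) = μ(x) + Σᵢⱼ K(x, Xᵢ) (K(X,X)⁻¹)ᵢⱼ (yⱼ - μ(Xⱼ))`. -/
noncomputable def postMean {d q : ℕ}
    (μ : EuclideanSpace ℝ (Fin d) → ℝ)
    (K : EuclideanSpace ℝ (Fin d) → EuclideanSpace ℝ (Fin d) → ℝ)
    (x : EuclideanSpace ℝ (Fin d)) (X : Fin q → EuclideanSpace ℝ (Fin d))
    (y : EuclideanSpace ℝ (Fin q)) : ℝ :=
  μ x + ∑ i, ∑ j,
    K x (X i) * ((Matrix.of fun i j => K (X i) (X j))⁻¹ i j) * (y j - μ (X j))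

section MatrixEntries

variable {𝕜 E ι : Type*} [NontriviallyNormedField 𝕜] [NormedAddCommGroup E] [NormedSpace 𝕜 E]
  [Fintype ι] [DecidableEq ι] {n : WithTop ℕ∞} {f : E → Matrix ι ι 𝕜}

theorem contDiff_det_of_entries (hf : ∀ i j, ContDiff 𝕜 n fun p => f p i j) :
    ContDiff 𝕜 n fun p => (f p).det := by
  simp only [Matrix.det_apply']
  exact ContDiff.sum fun σ _ => contDiff_const.mul (contDiff_prod fun i _ => hf (σ i) i)

theorem contDiff_adjugate_apply_of_entries (hf : ∀ i j, ContDiff 𝕜 n fun p => f p i j)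
    (i j : ι) : ContDiff 𝕜 n fun p => (f p).adjugate i j := by
  simp only [Matrix.adjugate_apply]
  refine contDiff_det_of_entries fun a b => ?_
  by_cases h : a = j
  · simpa [h] using contDiff_const
  · simpa [h] using hf a b

theorem contDiffAt_inv_apply_of_entries [CompleteSpace 𝕜]
    (hf : ∀ i j, ContDiff 𝕜 n fun p => f p i j) {p : E} (hp : IsUnit (f p).det) (i j : ι) :
    ContDiffAt 𝕜 n (fun p => (f p)⁻¹ i j) p := by
  have h : (fun p => (f p)⁻¹ i j) = fun p => ((f p).det)⁻¹ * (f p).adjugate i j := by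
    funext p
    rw [Matrix.inv_def, Matrix.smul_apply, Ring.inverse_eq_inv', smul_eq_mul]
  rw [h]
  exact ((contDiff_det_of_entries hf).contDiffAt.inv hp.ne_zero).mul
    (contDiff_adjugate_apply_of_entries hf i j).contDiffAt

end MatrixEntries

section PartialDerivative

variable {𝕜 E F Y G : Type*} [NontriviallyNormedField 𝕜]
  [NormedAddCommGroup E] [NormedSpace 𝕜 E] [NormedAddCommGroup F] [NormedSpace 𝕜 F]
  [NormedAddCommGroup Y] [NormedSpace 𝕜 Y] [NormedAddCommGroup G] [NormedSpace 𝕜 G]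

theorem IsCompact.exists_bound_norm_fderiv {T : Set E} (hT : IsCompact T) {f : E → F}
    (hf : ∀ p ∈ T, ContDiffAt 𝕜 1 f p) : ∃ C, 0 ≤ C ∧ ∀ p ∈ T, ‖fderiv 𝕜 f p‖ ≤ C := by
  obtain ⟨C, hC⟩ := hT.exists_bound_of_continuousOn fun p hp =>
    ((hf p hp).continuousAt_fderiv one_ne_zero).continuousWithinAt
  exact ⟨max C 0, le_max_right _ _, fun p hp => (hC p hp).trans (le_max_left _ _)⟩

theorem ContinuousLinearMap.norm_comp_inr_le (L : E × F →L[𝕜] G) :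
    ‖L.comp (ContinuousLinearMap.inr 𝕜 E F)‖ ≤ ‖L‖ :=
  (L.opNorm_comp_le _).trans
    (mul_le_of_le_one_right (norm_nonneg L) (ContinuousLinearMap.norm_inr_le_one 𝕜 E F))

theorem exists_hasFDerivAt_right_add_apply_norm_le {g : E × F → G} {c : E × F → Y →L[𝕜] G}
    {x : E} {X : F} (hg : DifferentiableAt 𝕜 g (x, X)) (hc : DifferentiableAt 𝕜 c (x, X))
    (y : Y) : ∃ D : F →L[𝕜] G, HasFDerivAt (fun X' => g (x, X') + c (x, X') y) D X ∧
      ‖D‖ ≤ ‖fderiv 𝕜 g (x, X)‖ + ‖fderiv 𝕜 c (x, X)‖ * ‖y‖ := by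
  have hinr := hasFDerivAt_prodMk_right (𝕜 := 𝕜) x X
  have hg' := hg.hasFDerivAt.comp X hinr
  have hc' := (hc.hasFDerivAt.comp X hinr).clm_apply (hasFDerivAt_const y X)
  refine ⟨_, hg'.add hc', ?_⟩
  rw [ContinuousLinearMap.comp_zero, zero_add]
  calc _ ≤ _ := norm_add_le _ _
    _ ≤ _ := by
      gcongr
      · exact ContinuousLinearMap.norm_comp_inr_le _
      · refine (ContinuousLinearMap.le_opNorm _ y).trans ?_
        rw [ContinuousLinearMap.opNorm_flip]
        gcongr
        exact ContinuousLinearMap.norm_comp_inr_le _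

end PartialDerivative

section KrigingWeights

variable {E ι : Type*} [NormedAddCommGroup E] [NormedSpace ℝ E] [Fintype ι] [DecidableEq ι]
  {n : WithTop ℕ∞} {K : E → E → ℝ}

def kernelMatrix (K : E → E → ℝ) (X : ι → E) : Matrix ι ι ℝ :=
  Matrix.of fun i j => K (X i) (X j)

noncomputable def krigingWeight (K : E → E → ℝ) (j : ι) (p : E × (ι → E)) : ℝ :=
  ∑ i, K p.1 (p.2 i) * (kernelMatrix K p.2)⁻¹ i j

noncomputable def krigingWeights (K : E → E → ℝ) (p : E × (ι → E)) :
    EuclideanSpace ℝ ι →L[ℝ] ℝ :=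
  ∑ j, krigingWeight K j p • EuclideanSpace.proj j

theorem contDiffAt_krigingWeight (hK : ContDiff ℝ n fun p : E × E => K p.1 p.2)
    {p : E × (ι → E)} (hp : IsUnit (kernelMatrix K p.2).det) (j : ι) :
    ContDiffAt ℝ n (krigingWeight K j) p := by
  have hcoord (i : ι) : ContDiff ℝ n fun p : E × (ι → E) => p.2 i :=
    (contDiff_apply ℝ E i).comp contDiff_snd
  have hentries (a b : ι) : ContDiff ℝ n fun p : E × (ι → E) => kernelMatrix K p.2 a b :=
    hK.comp ((hcoord a).prodMk (hcoord b))
  refine ContDiffAt.sum fun i _ => ?_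
  exact (hK.comp (contDiff_fst.prodMk (hcoord i))).contDiffAt.mul
    (contDiffAt_inv_apply_of_entries hentries hp i j)

theorem contDiffAt_krigingWeights (hK : ContDiff ℝ n fun p : E × E => K p.1 p.2)
    {p : E × (ι → E)} (hp : IsUnit (kernelMatrix K p.2).det) :
    ContDiffAt ℝ n (krigingWeights K) p :=
  ContDiffAt.sum fun j _ => (contDiffAt_krigingWeight hK hp j).smul contDiffAt_const

end KrigingWeights

section PostMean

variable {d q : ℕ} {μ : EuclideanSpace ℝ (Fin d) → ℝ}
  {K : EuclideanSpace ℝ (Fin d) → EuclideanSpace ℝ (Fin d) → ℝ} {n : WithTop ℕ∞}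

theorem postMean_eq_sum_krigingWeight (x : EuclideanSpace ℝ (Fin d))
    (X : Fin q → EuclideanSpace ℝ (Fin d)) (y : EuclideanSpace ℝ (Fin q)) :
    postMean μ K x X y = μ x + ∑ j, krigingWeight K j (x, X) * (y j - μ (X j)) := by
  rw [postMean, Finset.sum_comm]
  simp only [krigingWeight, Finset.sum_mul]
  rfl

theorem postMean_eq_add_krigingWeights (x : EuclideanSpace ℝ (Fin d))
    (X : Fin q → EuclideanSpace ℝ (Fin d)) (y : EuclideanSpace ℝ (Fin q)) :
    postMean μ K x X y = postMean μ K x X 0 + krigingWeights K (x, X) y := by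
  simp only [postMean_eq_sum_krigingWeight, krigingWeights, sum_apply, smul_apply,
    PiLp.proj_apply, PiLp.zero_apply, smul_eq_mul, mul_sub, Finset.sum_sub_distrib, zero_sub,
    mul_neg, Finset.sum_neg_distrib]
  ring

theorem contDiffAt_postMean_zero (hμ : ContDiff ℝ n μ)
    (hK : ContDiff ℝ n fun p : EuclideanSpace ℝ (Fin d) × EuclideanSpace ℝ (Fin d) => K p.1 p.2)
    {p : EuclideanSpace ℝ (Fin d) × (Fin q → EuclideanSpace ℝ (Fin d))}
    (hp : IsUnit (kernelMatrix K p.2).det) :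
    ContDiffAt ℝ n (fun p => postMean μ K p.1 p.2 0) p := by
  simp only [postMean_eq_sum_krigingWeight]
  refine (hμ.comp contDiff_fst).contDiffAt.add (ContDiffAt.sum fun j _ => ?_)
  exact (contDiffAt_krigingWeight hK hp j).mul
    (contDiffAt_const.sub (hμ.comp ((contDiff_apply ℝ _ j).comp contDiff_snd)).contDiffAt)

end PostMean

theorem stmt_8_general {d q : ℕ}
    (A : Set (EuclideanSpace ℝ (Fin d))) (S : Set (Fin q → EuclideanSpace ℝ (Fin d)))
    (hA : IsCompact A) (hS : IsCompact S)
    (μ : EuclideanSpace ℝ (Fin d) → ℝ) (hμ : ContDiff ℝ 1 μ)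
    (K : EuclideanSpace ℝ (Fin d) → EuclideanSpace ℝ (Fin d) → ℝ)
    (hK : ContDiff ℝ 1 fun p : EuclideanSpace ℝ (Fin d) × EuclideanSpace ℝ (Fin d) => K p.1 p.2)
    (hinv : ∀ X ∈ S, IsUnit (Matrix.of fun i j => K (X i) (X j)).det) :
    ∃ C₁ C₂ : ℝ, 0 ≤ C₁ ∧ 0 ≤ C₂ ∧
      ∀ x ∈ A, ∀ X ∈ S, ∀ y : EuclideanSpace ℝ (Fin q),
        DifferentiableAt ℝ (fun X' => postMean μ K x X' y) X ∧
        ‖fderiv ℝ (fun X' => postMean μ K x X' y) X‖ ≤ C₁ + C₂ * ‖y‖ := by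
  have hoffset (p) (hp : p ∈ A ×ˢ S) := contDiffAt_postMean_zero hμ hK (hinv p.2 hp.2)
  have hweights (p) (hp : p ∈ A ×ˢ S) := contDiffAt_krigingWeights hK (hinv p.2 hp.2)
  obtain ⟨C₁, hC₁, hbound₁⟩ := (hA.prod hS).exists_bound_norm_fderiv hoffset
  obtain ⟨C₂, hC₂, hbound₂⟩ := (hA.prod hS).exists_bound_norm_fderiv hweights
  refine ⟨C₁, C₂, hC₁, hC₂, fun x hx X hX y => ?_⟩
  have hp : (x, X) ∈ A ×ˢ S := ⟨hx, hX⟩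
  obtain ⟨D, hD, hDle⟩ := exists_hasFDerivAt_right_add_apply_norm_le
    ((hoffset _ hp).differentiableAt one_ne_zero) ((hweights _ hp).differentiableAt one_ne_zero) y
  simp only [← postMean_eq_add_krigingWeights] at hD
  refine ⟨hD.differentiableAt, hD.fderiv ▸ hDle.trans ?_⟩
  gcongr
  exacts [hbound₁ _ hp, hbound₂ _ hp]

/-- Bound on the gradient of the GP posterior mean with respect to the batch locations
(second bound of Lemma 1): for continuously differentiable `μ` and `K`, uniformly over
compact sets, `X' ↦ m(x, X', y)` is differentiable at `X` with
`‖D_X m(x, X, y)‖ ≤ C₁ + C₂ ‖y‖`. -/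
theorem stmt_8 {d q : ℕ} (hd : 1 ≤ d) (hq : 1 ≤ q)
    (A : Set (EuclideanSpace ℝ (Fin d))) (S : Set (Fin q → EuclideanSpace ℝ (Fin d)))
    (hA : IsCompact A) (hS : IsCompact S)
    (μ : EuclideanSpace ℝ (Fin d) → ℝ) (hμ : ContDiff ℝ 1 μ)
    (K : EuclideanSpace ℝ (Fin d) → EuclideanSpace ℝ (Fin d) → ℝ)
    (hK : ContDiff ℝ 1 fun p : EuclideanSpace ℝ (Fin d) × EuclideanSpace ℝ (Fin d) => K p.1 p.2)
    (hinv : ∀ X ∈ S, IsUnit (Matrix.of fun i j => K (X i) (X j)).det) :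
    ∃ C₁ C₂ : ℝ, 0 ≤ C₁ ∧ 0 ≤ C₂ ∧
      ∀ x ∈ A, ∀ X ∈ S, ∀ y : EuclideanSpace ℝ (Fin q),
        DifferentiableAt ℝ (fun X' => postMean μ K x X' y) X ∧
        ‖fderiv ℝ (fun X' => postMean μ K x X' y) X‖ ≤ C₁ + C₂ * ‖y‖ :=
  stmt_8_general A S hA hS μ hμ K hK hinv
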